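/- arXiv:1412.3265 — 5 statements merged into one kernel-verified Lean document; each statement's English description precedes it below -/
import Mathlib

section
/- Let x ≥ 2 and ρ ≥ 2 be integers with x^(ρ-1) ≡ 1 (mod ρ). Define J_n = ⌊x^(n+1)/ρ⌋ - ⌊x^n/ρ⌋. Then for all n ≥ 0, J_{n+ρ-1} = (x-1)·(J_{n+ρ-2} + J_{n+ρ-3} + ... + J_{n+1}) + x·J_n, where the sum ranges over the ρ-2 terms J_{n+1},...,J_{n+ρ-2}. -/
/-!
Write `F m = ⌊x ^ m / ρ⌋`, so that `J m = F (m + 1) - F m`. Fermat's condition makes `x ^ (m + ρ - 1)`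
and `x ^ m` leave the same remainder mod `ρ`, hence `ρ * (F (m + ρ - 1) - F m) = x ^ (m + ρ - 1) - x ^ m`;
multiplying by `x` shows that `G m = F (m + ρ - 1) - F m` satisfies `G (m + 1) = x * G m`. The sum in the
recurrence telescopes to `F (n + ρ - 1) - F (n + 1)`, and the recurrence is `G (n + 1) = x * G n` rearranged.
-/

open Finset

theorem Nat.ModEq.cast_sub_eq_mul_sub_div {ρ a b : ℕ} (h : a ≡ b [MOD ρ]) :
    (a : ℤ) - b = ρ * (((a / ρ : ℕ) : ℤ) - (b / ρ : ℕ)) := by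
  have ha : ((ρ * (a / ρ) + a % ρ : ℕ) : ℤ) = a := congrArg _ (Nat.div_add_mod a ρ)
  have hb : ((ρ * (b / ρ) + b % ρ : ℕ) : ℤ) = b := congrArg _ (Nat.div_add_mod b ρ)
  rw [show a % ρ = b % ρ from h] at ha
  push_cast at ha hb ⊢
  linarith

theorem Nat.ModEq.pow_add_modEq {x ρ s : ℕ} (h : x ^ s ≡ 1 [MOD ρ]) (m : ℕ) :
    x ^ (m + s) ≡ x ^ m [MOD ρ] := by
  simpa [pow_add] using (Nat.ModEq.refl (x ^ m)).mul h

theorem pow_div_sub_pow_div_succ {x ρ s : ℕ} (hρ : ρ ≠ 0) (h : x ^ s ≡ 1 [MOD ρ]) (m : ℕ) :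
    ((x ^ (m + 1 + s) / ρ : ℕ) : ℤ) - (x ^ (m + 1) / ρ : ℕ) =
      x * (((x ^ (m + s) / ρ : ℕ) : ℤ) - (x ^ m / ρ : ℕ)) := by
  apply mul_left_cancel₀ (Nat.cast_ne_zero.mpr hρ : (ρ : ℤ) ≠ 0)
  rw [mul_left_comm, ← (h.pow_add_modEq (m + 1)).cast_sub_eq_mul_sub_div,
    ← (h.pow_add_modEq m).cast_sub_eq_mul_sub_div]
  push_cast
  ring

theorem sum_Ico_reflect_sub (F : ℕ → ℤ) {s : ℕ} (hs : 1 ≤ s) (n : ℕ) :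
    ∑ i ∈ Ico 1 s, (F (n + s - i + 1) - F (n + s - i)) = F (n + s) - F (n + 1) := by
  rw [sum_Ico_reflect (fun j => F (j + 1) - F j) 1 (by omega), sum_Ico_sub _ (by omega)]
  congr 2
  omega

theorem stmt_1 (x ρ : ℕ) (hx : 2 ≤ x) (hρ : 2 ≤ ρ)
    (hferm : x ^ (ρ - 1) ≡ 1 [MOD ρ])
    (J : ℕ → ℕ) (hJ : ∀ n, J n = x ^ (n + 1) / ρ - x ^ n / ρ) :
    ∀ n, J (n + ρ - 1) =
      (x - 1) * (∑ i ∈ Finset.Ico 1 (ρ - 1), J (n + ρ - 1 - i)) + x * J n := by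
  intro n
  set F : ℕ → ℤ := fun m => ((x ^ m / ρ : ℕ) : ℤ)
  have hJF (m : ℕ) : (J m : ℤ) = F (m + 1) - F m := by
    rw [hJ m, Nat.cast_sub (Nat.div_le_div_right (Nat.pow_le_pow_right (by omega) m.le_succ))]
  have hsum : ∑ i ∈ Ico 1 (ρ - 1), (J (n + (ρ - 1) - i) : ℤ) = F (n + (ρ - 1)) - F (n + 1) := by
    simp only [hJF]
    exact sum_Ico_reflect_sub F (by omega) n
  have hshift := pow_div_sub_pow_div_succ (by omega) hferm n
  rw [show n + ρ - 1 = n + (ρ - 1) by omega]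
  zify [(by omega : 1 ≤ x)]
  rw [hsum, hJF, hJF, show n + (ρ - 1) + 1 = n + 1 + (ρ - 1) by omega]
  linear_combination hshift
end

section
/- Let x ≥ 2 and ρ ≥ 2 be integers with x^(ρ-1) ≡ 1 (mod ρ). Then for all n ≥ 0, ⌊x^(n+ρ)/ρ⌋ - ⌊x^(n+ρ-1)/ρ⌋ = (x-1)·(⌊x^(n+ρ-1)/ρ⌋ - ⌊x^n/ρ⌋) + ⌊x^(n+1)/ρ⌋ - ⌊x^n/ρ⌋. -/
/-!
Write `a = x ^ n` and `b = x ^ (n + ρ - 1) = a * x ^ (ρ - 1)`. The Fermat-type hypothesis says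
`a ≡ b [MOD ρ]`, so `a` and `b` share the remainder `r` modulo `ρ`, and multiplying by `x` gives
`⌊x b / ρ⌋ = x ⌊b / ρ⌋ + ⌊x r / ρ⌋` and `⌊x a / ρ⌋ = x ⌊a / ρ⌋ + ⌊x r / ρ⌋` with the same carry
`⌊x r / ρ⌋`. Subtracting, the recurrence becomes an identity of linear arithmetic.
-/

theorem Nat.mul_div_eq_mul_div_add_mul_mod_div (x b m : ℕ) :
    x * b / m = x * (b / m) + x * (b % m) / m := by
  rcases m.eq_zero_or_pos with rfl | hm
  · simp
  · conv_lhs => rw [← Nat.div_add_mod b m, mul_add, mul_left_comm, Nat.mul_add_div hm]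

theorem Nat.mul_div_sub_div_of_modEq {a b m x : ℕ} (hx : 1 ≤ x) (hmod : a ≡ b [MOD m])
    (hab : a ≤ b) :
    x * b / m - b / m = (x - 1) * (b / m - a / m) + (x * a / m - a / m) := by
  rw [Nat.mul_div_eq_mul_div_add_mul_mod_div x b, Nat.mul_div_eq_mul_div_add_mul_mod_div x a,
    show a % m = b % m from hmod]
  have hCB : a / m ≤ b / m := Nat.div_le_div_right hab
  generalize a / m = C, b / m = B, x * (b % m) / m = E at hCB ⊢
  obtain ⟨k, rfl⟩ := Nat.exists_eq_add_of_le hCB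
  obtain ⟨y, rfl⟩ := Nat.exists_eq_add_of_le' hx
  simp only [Nat.add_sub_cancel, Nat.add_sub_cancel_left]
  ring_nf
  omega

theorem stmt_2 (x ρ : ℕ) (hx : 2 ≤ x) (hρ : 2 ≤ ρ)
    (hferm : x ^ (ρ - 1) ≡ 1 [MOD ρ]) :
    ∀ n, x ^ (n + ρ) / ρ - x ^ (n + ρ - 1) / ρ =
      (x - 1) * (x ^ (n + ρ - 1) / ρ - x ^ n / ρ) + (x ^ (n + 1) / ρ - x ^ n / ρ) := by
  intro n
  have hsplit : x ^ (n + ρ - 1) = x ^ n * x ^ (ρ - 1) := by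
    rw [← pow_add]; congr 1; omega
  have hmod : x ^ n ≡ x ^ (n + ρ - 1) [MOD ρ] := by
    simpa [hsplit] using (hferm.mul_left (x ^ n)).symm
  have hle : x ^ n ≤ x ^ (n + ρ - 1) := Nat.pow_le_pow_right (by omega) (by omega)
  have hsucc : x ^ (n + ρ) = x * x ^ (n + ρ - 1) := by
    rw [← pow_succ']; congr 1; omega
  rw [hsucc, pow_succ', Nat.mul_div_sub_div_of_modEq (by omega) hmod hle]
end

section
/- Let x ≥ 2 and ρ ≥ 2 be integers with x^(ρ-1) ≡ 1 (mod ρ), and let S_n = ⌊x^(n+1)/ρ⌋. Then there exists an integer constant π (independent of n) such that for all n ≥ 0, S_{n+ρ-1} = (x-1)·(S_{n+ρ-2} + ... + S_{n+1}) + x·S_n + π. -/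
/-!
Write `ρ = k + 1` and `r n = x ^ (n + 1) % ρ`, so that `ρ * S n = x ^ (n + 1) - r n`.
The recurrence `f (n + k) = (x - 1) * (f (n + 1) + ⋯ + f (n + k - 1)) + x * f n` is linear and
satisfied by the geometric sequence `x ^ n`, since `(x - 1) * (x + ⋯ + x ^ (k - 1)) = x ^ k - x`.
By Fermat's condition `r` has period `k`, and for a `k`-periodic sequence the defect of the
recurrence is `-(x - 1)` times its sum over one period, which does not depend on `n`.
Hence `ρ` times the defect for `S` is constant, and so is the defect itself.
-/

open Finset Function

theorem Function.Periodic.sum_Ico_add_eq_sum_range {M : Type*} [AddCommMonoid M] {f : ℕ → M}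
    {a : ℕ} (hf : Periodic f a) (n : ℕ) : ∑ j ∈ Ico n (n + a), f j = ∑ j ∈ range a, f j := by
  rw [Finset.sum, Finset.sum, range_val, ← Nat.multiset_Ico_map_mod n a, Multiset.map_map]
  exact congrArg Multiset.sum (Multiset.map_congr rfl fun j _ => (hf.map_mod_nat j).symm)

section RecurrenceDefect

variable {R : Type*} [CommRing R]

def recurrenceDefect (x : R) (k : ℕ) (f : ℕ → R) (n : ℕ) : R :=
  f (n + k) - ((x - 1) * ∑ j ∈ Ico (n + 1) (n + k), f j + x * f n)

theorem recurrenceDefect_linear_combination (x a b : R) (k : ℕ) (f g : ℕ → R) (n : ℕ) :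
    recurrenceDefect x k (fun j => a * f j + b * g j) n =
      a * recurrenceDefect x k f n + b * recurrenceDefect x k g n := by
  simp only [recurrenceDefect, sum_add_distrib, ← mul_sum]
  ring

theorem recurrenceDefect_pow (x : R) {k : ℕ} (hk : 0 < k) (n : ℕ) :
    recurrenceDefect x k (x ^ ·) n = 0 := by
  have hgeom := geom_sum_Ico_mul x (show n + 1 ≤ n + k by omega)
  simp only [recurrenceDefect, pow_succ] at hgeom ⊢
  linear_combination -hgeom

theorem recurrenceDefect_of_periodic (x : R) {k : ℕ} (hk : 0 < k) {f : ℕ → R}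
    (hf : Periodic f k) (n : ℕ) :
    recurrenceDefect x k f n = -((x - 1) * ∑ j ∈ range k, f j) := by
  rw [recurrenceDefect, hf n, ← hf.sum_Ico_add_eq_sum_range n,
    sum_eq_sum_Ico_succ_bot (show n < n + k by omega)]
  ring

theorem mul_recurrenceDefect_of_periodic (x a c : R) {k : ℕ} (hk : 0 < k) {f r : ℕ → R}
    (hr : Periodic r k) (hf : ∀ n, c * f n = a * x ^ n - r n) (n : ℕ) :
    c * recurrenceDefect x k f n = (x - 1) * ∑ j ∈ range k, r j := by
  calc c * recurrenceDefect x k f n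
      = recurrenceDefect x k (fun j => c * f j + 0 * f j) n := by
        rw [recurrenceDefect_linear_combination]; ring
    _ = recurrenceDefect x k (fun j => a * x ^ j + (-1) * r j) n :=
        congrArg (recurrenceDefect x k · n) (funext fun j => by rw [zero_mul, add_zero, hf]; ring)
    _ = (x - 1) * ∑ j ∈ range k, r j := by
        rw [recurrenceDefect_linear_combination, recurrenceDefect_pow x hk,
          recurrenceDefect_of_periodic x hk hr]
        ring

end RecurrenceDefect

theorem pow_succ_mod_periodic {x k : ℕ} (hferm : x ^ k ≡ 1 [MOD k + 1]) :
    Periodic (fun n => x ^ (n + 1) % (k + 1)) k := fun n => by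
  simpa [Nat.ModEq, ← pow_add, add_right_comm n k 1] using
    Nat.ModEq.mul_left (x ^ (n + 1)) hferm

theorem stmt_10_general (x ρ : ℕ) (hρ : 2 ≤ ρ)
    (hferm : x ^ (ρ - 1) ≡ 1 [MOD ρ])
    (S : ℕ → ℕ) (hS : ∀ n, S n = x ^ (n + 1) / ρ) :
    ∃ π : ℤ, ∀ n, (S (n + ρ - 1) : ℤ) =
      ((x : ℤ) - 1) * (∑ i ∈ Finset.Ico 1 (ρ - 1), (S (n + ρ - 1 - i) : ℤ)) +
        (x : ℤ) * (S n : ℤ) + π := by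
  obtain ⟨k, rfl⟩ : ∃ k, ρ = k + 1 := ⟨ρ - 1, by omega⟩
  simp only [Nat.add_sub_cancel, Nat.add_succ_sub_one] at hferm ⊢
  have hk : 0 < k := by omega
  have hdiv : ∀ n, ((k + 1 : ℕ) : ℤ) * S n =
      (x : ℤ) * (x : ℤ) ^ n - ((x ^ (n + 1) % (k + 1) : ℕ) : ℤ) := fun n => by
    rw [hS, ← pow_succ', eq_sub_iff_add_eq]
    exact_mod_cast Nat.div_add_mod _ _
  have hconst := mul_recurrenceDefect_of_periodic (x : ℤ) _ _ hk
    ((pow_succ_mod_periodic hferm).comp Nat.cast) hdiv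
  refine ⟨recurrenceDefect (x : ℤ) k (fun n => S n) 0, fun n => ?_⟩
  have hρ0 : ((k + 1 : ℕ) : ℤ) ≠ 0 := by positivity
  have hdefect := mul_left_cancel₀ hρ0 ((hconst n).trans (hconst 0).symm)
  have hreflect := sum_Ico_reflect (fun m => (S m : ℤ)) 1 (show k ≤ n + k + 1 by omega)
  rw [show n + k + 1 - k = n + 1 by omega, Nat.add_sub_cancel] at hreflect
  rw [hreflect, ← hdefect, recurrenceDefect]
  ring

theorem stmt_10 (x ρ : ℕ) (hx : 2 ≤ x) (hρ : 2 ≤ ρ)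
    (hferm : x ^ (ρ - 1) ≡ 1 [MOD ρ])
    (S : ℕ → ℕ) (hS : ∀ n, S n = x ^ (n + 1) / ρ) :
    ∃ π : ℤ, ∀ n, (S (n + ρ - 1) : ℤ) =
      ((x : ℤ) - 1) * (∑ i ∈ Finset.Ico 1 (ρ - 1), (S (n + ρ - 1 - i) : ℤ)) +
        (x : ℤ) * (S n : ℤ) + π :=
  stmt_10_general x ρ hρ hferm S hS
end

section
/- Let x ≥ 2 and ρ ≥ 2 with gcd(x, ρ) = 1 and ρ prime. Define J_n = ⌊x^(n+1)/ρ⌋ - ⌊x^n/ρ⌋. Then J satisfies the recurrence J_{n+ρ-1} = (x-1)·Σ_{i=1}^{ρ-2} J_{n+ρ-1-i} + x·J_n for all n ≥ 0. -/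
/-!
Write `A k = ⌊x^k/ρ⌋`, so that `J k = A (k+1) - A k`. By Fermat, `x^(ρ-1) = 1 + ρ c` for some `c`,
hence `A (k + ρ - 1) = A k + x^k c`: shifting by a period adds an exact geometric term. The sum in
the recurrence telescopes to `A (n+ρ-1) - A (n+1) = x^n c - J n`, and `J (n+ρ-1) = J n + (x-1) x^n c`;
together these are the recurrence.
-/

open Finset

theorem Finset.sum_Ico_one_reflect_sub {G : Type*} [AddCommGroup G] (A : ℕ → G) {m : ℕ}
    (hm : 1 ≤ m) (n : ℕ) :
    ∑ i ∈ Ico 1 m, (A (n + m - i + 1) - A (n + m - i)) = A (n + m) - A (n + 1) := by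
  rw [sum_Ico_reflect (fun j => A (j + 1) - A j) 1 (by omega),
    show n + m + 1 - m = n + 1 by omega, show n + m + 1 - 1 = n + m by omega]
  exact sum_Ico_sub A (by omega)

theorem linear_recurrence_of_add_pow_mul {A J : ℕ → ℤ} {x c : ℤ} {m : ℕ} (hm : 1 ≤ m)
    (hJ : ∀ k, J k = A (k + 1) - A k) (hA : ∀ k, A (k + m) = A k + x ^ k * c) (n : ℕ) :
    J (n + m) = (x - 1) * ∑ i ∈ Ico 1 m, J (n + m - i) + x * J n := by
  have hsum : ∑ i ∈ Ico 1 m, J (n + m - i) = A (n + m) - A (n + 1) := by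
    simp only [hJ]
    exact sum_Ico_one_reflect_sub A hm n
  rw [hsum, hJ, hJ, show n + m + 1 = n + 1 + m by omega, hA, hA, pow_succ]
  ring

theorem Nat.pow_add_div_eq {x ρ m c : ℕ} (hρ : 0 < ρ) (hc : x ^ m = 1 + ρ * c) (k : ℕ) :
    x ^ (k + m) / ρ = x ^ k / ρ + x ^ k * c := by
  rw [pow_add, hc, mul_add, mul_one, mul_left_comm, Nat.add_mul_div_left _ _ hρ]

theorem Nat.Prime.exists_pow_pred_eq_one_add_mul {x ρ : ℕ} (hprime : ρ.Prime) (hx : 0 < x)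
    (hcop : x.Coprime ρ) : ∃ c, x ^ (ρ - 1) = 1 + ρ * c := by
  have hferm : 1 ≡ x ^ (ρ - 1) [MOD ρ] := by
    simpa [Nat.totient_prime hprime] using (Nat.ModEq.pow_totient hcop).symm
  have hpos : 1 ≤ x ^ (ρ - 1) := Nat.one_le_pow _ _ hx
  obtain ⟨c, hc⟩ := (Nat.modEq_iff_dvd' hpos).mp hferm
  exact ⟨c, by omega⟩

theorem stmt_14_general (x ρ : ℕ)
    (hprime : ρ.Prime) (hcop : Nat.Coprime x ρ)
    (J : ℕ → ℕ) (hJ : ∀ n, J n = x ^ (n + 1) / ρ - x ^ n / ρ) :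
    ∀ n, J (n + ρ - 1) =
      (x - 1) * (∑ i ∈ Finset.Ico 1 (ρ - 1), J (n + ρ - 1 - i)) + x * J n := by
  intro n
  have hx : 1 ≤ x := Nat.pos_of_ne_zero fun h => hprime.one_lt.ne' (by simpa [h] using hcop)
  obtain ⟨c, hc⟩ := hprime.exists_pow_pred_eq_one_add_mul hx hcop
  have hJA : ∀ k, (J k : ℤ) = ((x ^ (k + 1) / ρ : ℕ) : ℤ) - ((x ^ k / ρ : ℕ) : ℤ) := fun k => by
    rw [hJ, Nat.cast_sub (Nat.div_le_div_right (Nat.pow_le_pow_right hx k.le_succ))]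
  have hA : ∀ k, ((x ^ (k + (ρ - 1)) / ρ : ℕ) : ℤ) = ((x ^ k / ρ : ℕ) : ℤ) + (x : ℤ) ^ k * c :=
    fun k => by rw [Nat.pow_add_div_eq hprime.pos hc]; push_cast; rfl
  rw [Nat.add_sub_assoc hprime.one_le]
  zify [hx]
  exact linear_recurrence_of_add_pow_mul (A := fun k => ((x ^ k / ρ : ℕ) : ℤ))
    (m := ρ - 1) (Nat.sub_pos_of_lt hprime.one_lt) hJA hA n

theorem stmt_14 (x ρ : ℕ) (hx : 2 ≤ x) (hρ : 2 ≤ ρ)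
    (hprime : ρ.Prime) (hcop : Nat.Coprime x ρ)
    (J : ℕ → ℕ) (hJ : ∀ n, J n = x ^ (n + 1) / ρ - x ^ n / ρ) :
    ∀ n, J (n + ρ - 1) =
      (x - 1) * (∑ i ∈ Finset.Ico 1 (ρ - 1), J (n + ρ - 1 - i)) + x * J n :=
  stmt_14_general x ρ hprime hcop J hJ
end

section
/- For integers x ≥ 2, ρ ≥ 2 with x^(ρ-1) ≡ 1 (mod ρ), the sequence J_n = ⌊x^(n+1)/ρ⌋ - ⌊x^n/ρ⌋ satisfies J_{n+ρ-1} - J_n = (x-1)·(J_{n+ρ-2} + J_{n+ρ-3} + ... + J_n) for all n ≥ 0, where the sum has ρ-1 terms. -/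
/-!
Write `q n = ⌊x ^ n / ρ⌋`, so that `J n = q (n + 1) - q n` and the sum on the right telescopes to
`q (n + ρ - 1) - q n`. Since `x ^ (ρ - 1) ≡ 1 (mod ρ)`, the powers `x ^ (n + ρ - 1)` and `x ^ n` have
the same remainder, so `ρ (q (n + ρ - 1) - q n) = x ^ n (x ^ (ρ - 1) - 1)` exactly. This difference
therefore gets multiplied by `x` when `n` is shifted by one, which is the recurrence.
-/

theorem Nat.ModEq.mul_div_sub_div {a b d : ℕ} (h : a ≡ b [MOD d]) :
    (d : ℤ) * ((a / d : ℕ) - (b / d : ℕ)) = a - b := by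
  have ha : ((d * (a / d) + a % d : ℕ) : ℤ) = a := congrArg _ (Nat.div_add_mod a d)
  have hb : ((d * (b / d) + b % d : ℕ) : ℤ) = b := congrArg _ (Nat.div_add_mod b d)
  rw [Nat.cast_add, Nat.cast_mul] at ha hb
  rw [show a % d = b % d from h] at ha
  linear_combination ha - hb

theorem Nat.ModEq.pow_add_modEq_pow {x k d : ℕ} (h : x ^ k ≡ 1 [MOD d]) (n : ℕ) :
    x ^ (n + k) ≡ x ^ n [MOD d] := by
  simpa [pow_add] using h.mul_left (x ^ n)

theorem div_pow_add_sub_div_pow_succ {x k d : ℕ} (h : x ^ k ≡ 1 [MOD d]) (n : ℕ) :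
    ((x ^ (n + 1 + k) / d : ℕ) : ℤ) - (x ^ (n + 1) / d : ℕ) =
      x * (((x ^ (n + k) / d : ℕ) : ℤ) - (x ^ n / d : ℕ)) := by
  rcases eq_or_ne d 0 with rfl | hd
  · simp
  refine mul_left_cancel₀ (Nat.cast_ne_zero.mpr hd : (d : ℤ) ≠ 0) ?_
  rw [mul_left_comm, (h.pow_add_modEq_pow n).mul_div_sub_div,
    (h.pow_add_modEq_pow (n + 1)).mul_div_sub_div]
  push_cast
  ring

theorem stmt_17_general (x ρ : ℕ) (hρ : 2 ≤ ρ)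
    (hferm : x ^ (ρ - 1) ≡ 1 [MOD ρ])
    (J : ℕ → ℤ) (hJ : ∀ n, J n = (x ^ (n + 1) / ρ : ℕ) - (x ^ n / ρ : ℕ)) :
    ∀ n, J (n + ρ - 1) - J n =
      ((x : ℤ) - 1) * ∑ i ∈ Finset.range (ρ - 1), J (n + i) := by
  intro n
  obtain ⟨k, rfl⟩ : ∃ k, ρ = k + 1 := ⟨ρ - 1, by omega⟩
  rw [show n + (k + 1) - 1 = n + k by omega]
  simp only [Nat.add_sub_cancel] at hferm ⊢
  have telescope : ∑ i ∈ Finset.range k, J (n + i) =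
      ((x ^ (n + k) / (k + 1) : ℕ) : ℤ) - (x ^ n / (k + 1) : ℕ) := by
    simp only [hJ]
    exact Finset.sum_range_sub (fun i => ((x ^ (n + i) / (k + 1) : ℕ) : ℤ)) k
  rw [telescope, hJ, hJ, add_right_comm]
  linear_combination div_pow_add_sub_div_pow_succ hferm n

theorem stmt_17 (x ρ : ℕ) (hx : 2 ≤ x) (hρ : 2 ≤ ρ)
    (hferm : x ^ (ρ - 1) ≡ 1 [MOD ρ])
    (J : ℕ → ℤ) (hJ : ∀ n, J n = (x ^ (n + 1) / ρ : ℕ) - (x ^ n / ρ : ℕ)) :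
    ∀ n, J (n + ρ - 1) - J n =
      ((x : ℤ) - 1) * ∑ i ∈ Finset.range (ρ - 1), J (n + i) :=
  stmt_17_general x ρ hρ hferm J hJ
end
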